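/- (Subset Lemma) Let (X,d) be a metric space, let P ⊆ X be a nonempty finite set, let k ≥ 1 with k ≤ |P|, let S ⊆ P be a subset with |S| ≥ k, and let C be a valid farthest-first output on S with k centers. Then cost(C,S) ≤ 2·OPT(P,k), where OPT(P,k) denotes the optimal k-center cost for the full set P (not for S). -/

import Mathlib

/-!
Let `t ∈ S` be a point of `S` farthest from `C`, at distance `R = cost(C,S)`. By the
farthest-first rule each center was, when chosen, at least as far from the earlier centers
as `t` was, hence at distance `≥ R` from them; and `t` is at distance `≥ R` from every
center. So the `k` centers together with `t` are `k + 1` points of `P` that are pairwise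
`R`-separated. An optimal `k`-center solution for `P` puts two of them in the ball of
radius `OPT(P,k)` around the same center, whence `R ≤ 2·OPT(P,k)`.
-/

/-- `setDist s C` is the distance from the point `s` to the set `C`,
i.e. the infimum (for nonempty finite `C`, the minimum) of `dist s c` over `c ∈ C`. -/
noncomputable def setDist {X : Type*} [MetricSpace X] (s : X) (C : Set X) : ℝ :=
  sInf ((fun c => dist s c) '' C)

/-- `cost C S` is the supremum (for nonempty finite `S`, the maximum) over `s ∈ S`
of the distance from `s` to the center set `C`. -/
noncomputable def cost {X : Type*} [MetricSpace X] (C S : Set X) : ℝ :=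
  sSup ((fun s => setDist s C) '' S)

/-- `kOPT P k` is the optimal `k`-center cost on the finite set `P`. -/
noncomputable def kOPT {X : Type*} [MetricSpace X] (P : Finset X) (k : ℕ) : ℝ :=
  sInf { r : ℝ | ∃ C : Finset X, C ⊆ P ∧ C.card = k ∧ cost (C : Set X) (P : Set X) = r }

/-- `IsFF S k C` : `C` is a valid farthest-first output on `S` with `k` centers. -/
def IsFF {X : Type*} [MetricSpace X] (S : Finset X) (k : ℕ) (C : Finset X) : Prop :=
  ∃ c : Fin k → X, Function.Injective c ∧ (∀ i, c i ∈ S) ∧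
    (↑C : Set X) = Set.range c ∧
    ∀ i : Fin k, 0 < (i : ℕ) → ∀ s ∈ S,
      setDist s (c '' {j | j < i}) ≤ setDist (c i) (c '' {j | j < i})

section

variable {X : Type*} [MetricSpace X]

lemma setDist_le_dist (s : X) {C : Set X} (hC : C.Finite) {c : X} (hc : c ∈ C) :
    setDist s C ≤ dist s c :=
  csInf_le (hC.image _).bddBelow ⟨c, hc, rfl⟩

lemma le_setDist (s : X) {C : Set X} (hC : C.Nonempty) {r : ℝ}
    (h : ∀ c ∈ C, r ≤ dist s c) : r ≤ setDist s C :=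
  le_csInf (hC.image _) (by rintro _ ⟨c, hc, rfl⟩; exact h c hc)

lemma setDist_anti (s : X) {C D : Set X} (hC : C.Finite) (hD : D.Nonempty) (hDC : D ⊆ C) :
    setDist s C ≤ setDist s D :=
  le_setDist s hD fun _ hd => setDist_le_dist s hC (hDC hd)

lemma exists_dist_eq_setDist (s : X) {C : Set X} (hC : C.Finite) (hne : C.Nonempty) :
    ∃ c ∈ C, dist s c = setDist s C :=
  (hne.image fun c => dist s c).csInf_mem (hC.image _)

lemma setDist_le_cost {C S : Set X} (hS : S.Finite) {s : X} (hs : s ∈ S) :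
    setDist s C ≤ cost C S :=
  le_csSup (hS.image _).bddAbove ⟨s, hs, rfl⟩

lemma exists_setDist_eq_cost {C S : Set X} (hS : S.Finite) (hne : S.Nonempty) :
    ∃ s ∈ S, setDist s C = cost C S :=
  (hne.image fun s => setDist s C).csSup_mem (hS.image _)

lemma exists_dist_le_cost {C S : Set X} (hC : C.Finite) (hCne : C.Nonempty) (hS : S.Finite)
    {s : X} (hs : s ∈ S) : ∃ c ∈ C, dist s c ≤ cost C S := by
  obtain ⟨c, hc, hdist⟩ := exists_dist_eq_setDist s hC hCne
  exact ⟨c, hc, hdist ▸ setDist_le_cost hS hs⟩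

lemma exists_cost_eq_kOPT (P : Finset X) {k : ℕ} (hkP : k ≤ P.card) :
    ∃ C : Finset X, C ⊆ P ∧ C.card = k ∧ cost (C : Set X) (P : Set X) = kOPT P k := by
  have hfin : {r : ℝ | ∃ C : Finset X, C ⊆ P ∧ C.card = k ∧
      cost (C : Set X) (P : Set X) = r}.Finite := by
    refine (P.powerset.finite_toSet.image fun C : Finset X => cost (C : Set X) P).subset ?_
    rintro _ ⟨C, hCP, -, rfl⟩
    exact ⟨C, Finset.mem_powerset.mpr hCP, rfl⟩
  obtain ⟨C, hCP, hcard⟩ := Finset.exists_subset_card_eq hkP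
  exact Set.Nonempty.csInf_mem (s := {r : ℝ | ∃ C : Finset X, C ⊆ P ∧ C.card = k ∧
    cost (C : Set X) (P : Set X) = r}) ⟨_, C, hCP, hcard, rfl⟩ hfin

lemma le_two_mul_of_pairwise_le_dist {ι : Type*} [Fintype ι] (p : ι → X) (Q : Finset X)
    (hcard : Q.card < Fintype.card ι) {r R : ℝ} (hcover : ∀ i, ∃ q ∈ Q, dist (p i) q ≤ r)
    (hsep : Pairwise fun i j => R ≤ dist (p i) (p j)) : R ≤ 2 * r := by
  choose q hqQ hq using hcover
  obtain ⟨i, -, j, -, hij, hqij⟩ :=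
    Finset.exists_ne_map_eq_of_card_lt_of_maps_to hcard fun i _ => hqQ i
  calc R ≤ dist (p i) (p j) := hsep hij
    _ ≤ dist (p i) (q i) + dist (q j) (p j) := hqij ▸ dist_triangle _ _ _
    _ ≤ r + r := add_le_add (hq i) (dist_comm (p j) (q j) ▸ hq j)
    _ = 2 * r := (two_mul r).symm

lemma pairwise_setDist_range_le_dist_of_farthestFirst {S : Finset X} {k : ℕ} {c : Fin k → X}
    (hFF : ∀ i : Fin k, 0 < (i : ℕ) → ∀ s ∈ S,
      setDist s (c '' {j | j < i}) ≤ setDist (c i) (c '' {j | j < i}))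
    {s : X} (hs : s ∈ S) : Pairwise fun i j => setDist s (Set.range c) ≤ dist (c i) (c j) := by
  have hlt {i j : Fin k} (hij : i < j) : setDist s (Set.range c) ≤ dist (c j) (c i) :=
    calc setDist s (Set.range c) ≤ setDist s (c '' {m | m < j}) :=
          setDist_anti s (Set.finite_range c) ⟨c i, i, hij, rfl⟩ (Set.image_subset_range _ _)
      _ ≤ setDist (c j) (c '' {m | m < j}) := hFF j (Nat.zero_lt_of_lt hij) s hs
      _ ≤ dist (c j) (c i) := setDist_le_dist _ (Set.toFinite _) ⟨i, hij, rfl⟩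
  intro i j hij
  rcases hij.lt_or_gt with h | h
  · exact dist_comm (c j) (c i) ▸ hlt h
  · exact hlt h

end

theorem stmt_11_general {X : Type*} [MetricSpace X] (P : Finset X)
    (k : ℕ) (hk : 1 ≤ k) (hkP : k ≤ P.card)
    (S : Finset X) (hSP : S ⊆ P)
    (C : Finset X) (hC : IsFF S k C) :
    cost (C : Set X) (S : Set X) ≤ 2 * kOPT P k := by
  obtain ⟨c, -, hcS, hCc, hFF⟩ := hC
  obtain ⟨Q, -, hQcard, hQcost⟩ := exists_cost_eq_kOPT P hkP
  obtain ⟨t, htS, ht⟩ := exists_setDist_eq_cost (C := (C : Set X)) S.finite_toSet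
    ⟨c ⟨0, hk⟩, hcS _⟩
  have hQne : (Q : Set X).Nonempty := Finset.card_pos.mp (by omega)
  have hcover (o : Option (Fin k)) : ∃ q ∈ Q, dist (o.elim t c) q ≤ kOPT P k := by
    have hoP : o.elim t c ∈ P := by cases o <;> simp [hSP htS, hSP (hcS _)]
    exact hQcost ▸ exists_dist_le_cost Q.finite_toSet hQne P.finite_toSet hoP
  have hsep_t (i : Fin k) : cost (C : Set X) S ≤ dist t (c i) :=
    ht ▸ setDist_le_dist t C.finite_toSet (hCc ▸ Set.mem_range_self i)
  have hsep_c := pairwise_setDist_range_le_dist_of_farthestFirst hFF htS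
  rw [← hCc, ht] at hsep_c
  have hsep : Pairwise fun o o' : Option (Fin k) =>
      cost (C : Set X) S ≤ dist (o.elim t c) (o'.elim t c) := by
    rintro (_ | i) (_ | j) hij
    · exact absurd rfl hij
    · exact hsep_t j
    · exact dist_comm t (c i) ▸ hsep_t i
    · exact hsep_c (Option.some_injective _ |>.ne_iff.mp hij)
  exact le_two_mul_of_pairwise_le_dist _ Q (by simp [hQcard]) hcover hsep

/-- Subset Lemma: if `S ⊆ P` with `|S| ≥ k` and `C` is a valid farthest-first
output on `S` with `k` centers, then `cost(C,S) ≤ 2·OPT(P,k)`, where `OPT(P,k)`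
is the optimal `k`-center cost for the full set `P`. -/
theorem stmt_11 {X : Type*} [MetricSpace X] (P : Finset X) (hP : P.Nonempty)
    (k : ℕ) (hk : 1 ≤ k) (hkP : k ≤ P.card)
    (S : Finset X) (hSP : S ⊆ P) (hkS : k ≤ S.card)
    (C : Finset X) (hC : IsFF S k C) :
    cost (C : Set X) (S : Set X) ≤ 2 * kOPT P k :=
  stmt_11_general P k hk hkP S hSP C hC
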